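/- arXiv:1010.5280 — 2 statements merged into one kernel-verified Lean document; each statement's English description precedes it below -/
import Mathlib

section
/- Let p be a nonzero polynomial with complex coefficients and let ξ ∈ ℂ be a root of p of multiplicity m (so m = rootMultiplicity of ξ in p, m ≥ 1). Then the difference quotient of the Newton map at ξ tends to (m−1)/m: the function z ↦ (N_p(z) − ξ)/(z − ξ) tends to ((m : ℂ) − 1)/m as z → ξ along the punctured neighborhood filter 𝓝[≠] ξ. In particular, each root of p of multiplicity m is a fixed point of N_p with multiplier (m−1)/m, hence attracting. -/
/-- The Newton map of a polynomial `p`: `N_p(z) = z - p(z)/p'(z)`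
(with the convention that division by zero yields 0, so `N_p(z) = z` when `p'(z) = 0`). -/
noncomputable def NewtonMap (p : Polynomial ℂ) (z : ℂ) : ℂ :=
  z - Polynomial.eval z p / Polynomial.eval z (Polynomial.derivative p)

/-!
Near a root `ξ` of multiplicity `k + 1` write `p = (X - ξ)^(k+1) q` with `q(ξ) ≠ 0`. Then
`p' = (X - ξ)^k ((k + 1) q + (X - ξ) q')`, so the power `(z - ξ)^k` cancels in `p/p'` and
`(N_p(z) - ξ)/(z - ξ) = 1 - q(z)/((k + 1) q(z) + (z - ξ) q'(z))`, a function continuous at `ξ`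
with value `1 - 1/(k + 1)`.
-/

open Polynomial Filter Topology

theorem Polynomial.derivative_X_sub_C_pow_succ_mul {R : Type*} [CommRing R] (a : R) (n : ℕ)
    (q : R[X]) :
    derivative ((X - C a) ^ (n + 1) * q) =
      (X - C a) ^ n * (C ((n : R) + 1) * q + (X - C a) * derivative q) := by
  rw [derivative_mul, derivative_pow_succ, derivative_X_sub_C]
  ring

/- No hypothesis on `z` is needed: where the last denominator vanishes so does `p'(z)`, and both
sides equal `z` by the convention `x / 0 = 0`. -/
theorem newtonMap_X_sub_C_pow_succ_mul (ξ : ℂ) (k : ℕ) (q : ℂ[X]) (z : ℂ) :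
    NewtonMap ((X - C ξ) ^ (k + 1) * q) z =
      z - (z - ξ) * (q.eval z / (((k : ℂ) + 1) * q.eval z + (z - ξ) * q.derivative.eval z)) := by
  rcases eq_or_ne z ξ with rfl | hz
  · simp [NewtonMap]
  · rw [NewtonMap, derivative_X_sub_C_pow_succ_mul]
    simp only [eval_mul, eval_pow, eval_add, eval_sub, eval_X, eval_C]
    rw [pow_succ, mul_assoc, mul_div_mul_left _ _ (pow_ne_zero k (sub_ne_zero.2 hz)),
      mul_div_assoc]

theorem tendsto_newtonMap_X_sub_C_pow_succ_mul (ξ : ℂ) (k : ℕ) (q : ℂ[X])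
    (hq : q.eval ξ ≠ 0) :
    Tendsto (fun z => (NewtonMap ((X - C ξ) ^ (k + 1) * q) z - ξ) / (z - ξ)) (𝓝[≠] ξ)
      (𝓝 (1 - 1 / ((k : ℂ) + 1))) := by
  set g : ℂ → ℂ := fun z => ((k : ℂ) + 1) * q.eval z + (z - ξ) * q.derivative.eval z
  have hk : (k : ℂ) + 1 ≠ 0 := Nat.cast_add_one_ne_zero k
  have hgξ : g ξ = ((k : ℂ) + 1) * q.eval ξ := by simp [g]
  have hquot : ∀ z ∈ ({ξ}ᶜ : Set ℂ),
      (NewtonMap ((X - C ξ) ^ (k + 1) * q) z - ξ) / (z - ξ) = 1 - q.eval z / g z := by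
    intro z hz
    rw [newtonMap_X_sub_C_pow_succ_mul, sub_right_comm, ← mul_one_sub,
      mul_div_cancel_left₀ _ (sub_ne_zero.2 hz)]
  have hcont : ContinuousAt (fun z => 1 - q.eval z / g z) ξ := by
    have : ContinuousAt g ξ := by fun_prop
    exact continuousAt_const.sub (q.continuousAt.div this (hgξ ▸ mul_ne_zero hk hq))
  have hval : 1 - q.eval ξ / g ξ = 1 - 1 / ((k : ℂ) + 1) := by
    rw [hgξ, div_mul_cancel_right₀ hq, one_div]
  rw [tendsto_congr' (eventually_nhdsWithin_of_forall hquot), ← hval]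
  exact hcont.tendsto.mono_left nhdsWithin_le_nhds

/-- A root of `p` of multiplicity `m ≥ 1` is a fixed point of the Newton map with
multiplier `(m-1)/m`: the difference quotient of `N_p` at `ξ` tends to `(m-1)/m`
as `z → ξ` along the punctured neighborhood filter. -/
theorem newtonMap_multiplier_at_root (p : Polynomial ℂ) (hp : p ≠ 0) (ξ : ℂ) (m : ℕ)
    (hm : m = p.rootMultiplicity ξ) (hm1 : 1 ≤ m) :
    Filter.Tendsto (fun z => (NewtonMap p z - ξ) / (z - ξ)) (nhdsWithin ξ {ξ}ᶜ)
      (nhds (((m : ℂ) - 1) / m)) := by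
  obtain ⟨k, rfl⟩ : ∃ k, m = k + 1 := ⟨m - 1, by omega⟩
  have hfactor : (X - C ξ) ^ (k + 1) * (p /ₘ (X - C ξ) ^ (k + 1)) = p := by
    rw [hm]; exact pow_mul_divByMonic_rootMultiplicity_eq p ξ
  have hq : (p /ₘ (X - C ξ) ^ (k + 1)).eval ξ ≠ 0 := by
    rw [hm]; exact eval_divByMonic_pow_rootMultiplicity_ne_zero ξ hp
  have hk : (k : ℂ) + 1 ≠ 0 := Nat.cast_add_one_ne_zero k
  rw [← hfactor]
  convert tendsto_newtonMap_X_sub_C_pow_succ_mul ξ k _ hq using 2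
  push_cast
  field_simp
end

section
/- Let p be a polynomial with complex coefficients of degree d ≥ 1. Then N_p(z)/z tends to ((d : ℂ) − 1)/d as z → ∞, i.e., the function z ↦ N_p(z)/z tends to ((d : ℂ) − 1)/d along the cobounded filter on ℂ. (This expresses that ∞ is a fixed point of the Newton map with multiplier d/(d−1); for d ≥ 2 this multiplier has modulus greater than 1, so ∞ is a repelling fixed point, as required in Definition 1.1 of a Newton map.) -/
/-!
Near `∞` both `p(z)` and `z p'(z)` are asymptotic to their leading monomials `a z^d` and
`d a z^d`, so `p(z) / (z p'(z)) → 1/d`, and `N_p(z)/z = 1 - p(z) / (z p'(z)) → 1 - 1/d`.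
-/

open Polynomial Filter Asymptotics Bornology Topology

namespace Polynomial

variable {K : Type*} [NormedField K] [CharZero K]

theorem isEquivalent_cobounded_mul_eval_derivative (p : K[X]) :
    (fun z => z * p.derivative.eval z) ~[cobounded K]
      fun z => p.natDegree * p.leadingCoeff * z ^ p.natDegree := by
  refine (IsEquivalent.refl.mul isEquivalent_cobounded_leading_monomial).congr_right
    (.of_forall fun z => ?_)
  simp only [Pi.mul_apply, leadingCoeff_derivative, natDegree_derivative]
  rcases p.natDegree with _ | n
  · simp
  · simp only [Nat.add_sub_cancel, pow_succ]
    ring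

theorem tendsto_eval_div_mul_eval_derivative_cobounded {p : K[X]} (hp : 0 < p.natDegree) :
    Tendsto (fun z => p.eval z / (z * p.derivative.eval z)) (cobounded K)
      (𝓝 (p.natDegree : K)⁻¹) := by
  have hlead : p.leadingCoeff ≠ 0 := leadingCoeff_ne_zero.mpr (ne_zero_of_natDegree_gt hp)
  have hdeg : (p.natDegree : K) ≠ 0 := Nat.cast_ne_zero.mpr hp.ne'
  refine (isEquivalent_cobounded_leading_monomial.div
    (isEquivalent_cobounded_mul_eval_derivative p)).tendsto_nhds_iff.mpr
    (tendsto_const_nhds.congr' ?_)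
  filter_upwards [eventually_ne_cobounded 0] with z hz
  have hzd : z ^ p.natDegree ≠ 0 := pow_ne_zero _ hz
  simp only [Pi.div_apply]
  field_simp

end Polynomial

theorem newtonMap_div_eq_one_sub (p : ℂ[X]) {z : ℂ} (hz : z ≠ 0) :
    NewtonMap p z / z = 1 - p.eval z / (z * p.derivative.eval z) := by
  rw [NewtonMap, sub_div, div_self hz, div_div, mul_comm]

/-- For a polynomial `p` of degree `d ≥ 1`, the Newton map satisfies
`N_p(z)/z → (d-1)/d` as `z → ∞` (along the cobounded filter on `ℂ`);
`∞` is a fixed point of `N_p` with multiplier `d/(d-1)`. -/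
theorem newtonMap_tendsto_at_infinity (p : Polynomial ℂ) (d : ℕ)
    (hd : d = p.natDegree) (hd1 : 1 ≤ d) :
    Filter.Tendsto (fun z => NewtonMap p z / z) (Bornology.cobounded ℂ)
      (nhds (((d : ℂ) - 1) / d)) := by
  subst hd
  have hdeg : (p.natDegree : ℂ) ≠ 0 := Nat.cast_ne_zero.mpr (by omega)
  have hlim := tendsto_const_nhds (x := (1 : ℂ)).sub
    (tendsto_eval_div_mul_eval_derivative_cobounded (p := p) hd1)
  rw [show (1 : ℂ) - (p.natDegree : ℂ)⁻¹ = (p.natDegree - 1) / p.natDegree by field_simp] at hlim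
  refine hlim.congr' ?_
  filter_upwards [eventually_ne_cobounded 0] with z hz
  exact (newtonMap_div_eq_one_sub p hz).symm
end
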